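/- Fix a real s with s ≠ 0 and s ≠ 1 and define ψ_s : (0,∞) → ℝ by ψ_s(x) = [s(s−1)]^{−1}·[((x^{1−s} + 1)/2)·((x+1)/2)^s − (x+1)/2]. Then ψ_s is twice differentiable on (0,∞) with ψ_s''(x) = ((x^{−s−1} + 1)/8)·((x+1)/2)^{s−2} > 0 for all x > 0; in particular ψ_s is strictly convex on (0,∞) and ψ_s''(1) = 1/4. -/

import Mathlib

open Real Set Filter

/-- Generating function of the generalized AG mean divergence of type `s`. -/
noncomputable def psiS (s x : ℝ) : ℝ :=
  (s * (s - 1))⁻¹ * (((x ^ (1 - s) + 1) / 2) * ((x + 1) / 2) ^ s - (x + 1) / 2)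

/-- First derivative of `psiS`. -/
noncomputable def Dpsi (s x : ℝ) : ℝ :=
  (s * (s - 1))⁻¹ *
    ((1 - s) * x ^ (-s) / 2 * ((x + 1) / 2) ^ s +
      (x ^ (1 - s) + 1) / 2 * (s / 2 * ((x + 1) / 2) ^ (s - 1)) - 1 / 2)

lemma hasDerivAt_half (x : ℝ) : HasDerivAt (fun y : ℝ => (y + 1) / 2) (1 / 2) x := by
  simpa using ((hasDerivAt_id x).add_const 1).div_const 2

lemma hasDerivAt_psiS (s : ℝ) {x : ℝ} (hx : 0 < x) :
    HasDerivAt (psiS s) (Dpsi s x) x := by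
  have hwpos : (0 : ℝ) < (x + 1) / 2 := by linarith
  have hw := hasDerivAt_half x
  have hws : HasDerivAt (fun y : ℝ => ((y + 1) / 2) ^ s)
      (1 / 2 * s * ((x + 1) / 2) ^ (s - 1)) x := hw.rpow_const (Or.inl hwpos.ne')
  have hu : HasDerivAt (fun y : ℝ => (y ^ (1 - s) + 1) / 2)
      ((1 - s) * x ^ (1 - s - 1) / 2) x := by
    have := ((Real.hasDerivAt_rpow_const (p := 1 - s) (Or.inl hx.ne')).add_const 1).div_const 2
    simpa [mul_div_assoc] using this
  have hmain := ((hu.mul hws).sub hw).const_mul (s * (s - 1))⁻¹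
  have hex : (1 - s - 1 : ℝ) = -s := by ring
  rw [hex] at hu hmain
  refine hmain.congr_deriv ?_
  unfold Dpsi
  ring

lemma hasDerivAt_Dpsi (s : ℝ) (hs0 : s ≠ 0) (hs1 : s ≠ 1) {x : ℝ} (hx : 0 < x) :
    HasDerivAt (Dpsi s) (((x ^ (-s - 1) + 1) / 8) * ((x + 1) / 2) ^ (s - 2)) x := by
  have hwpos : (0 : ℝ) < (x + 1) / 2 := by linarith
  have hw := hasDerivAt_half x
  have hws : HasDerivAt (fun y : ℝ => ((y + 1) / 2) ^ s)
      (1 / 2 * s * ((x + 1) / 2) ^ (s - 1)) x := hw.rpow_const (Or.inl hwpos.ne')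
  have hws1 : HasDerivAt (fun y : ℝ => ((y + 1) / 2) ^ (s - 1))
      (1 / 2 * (s - 1) * ((x + 1) / 2) ^ (s - 1 - 1)) x := hw.rpow_const (Or.inl hwpos.ne')
  have h1 : HasDerivAt (fun y : ℝ => y ^ (-s)) (-s * x ^ (-s - 1)) x := by
    simpa using Real.hasDerivAt_rpow_const (p := -s) (Or.inl hx.ne')
  have hu : HasDerivAt (fun y : ℝ => (y ^ (1 - s) + 1) / 2)
      ((1 - s) * x ^ (-s) / 2) x := by
    have := ((Real.hasDerivAt_rpow_const (p := 1 - s) (Or.inl hx.ne')).add_const 1).div_const 2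
    have hex : (1 - s - 1 : ℝ) = -s := by ring
    rw [hex] at this
    simpa [mul_div_assoc] using this
  have hA := (((h1.const_mul (1 - s)).div_const 2).mul hws)
  have hB := hu.mul (hws1.const_mul (s / 2))
  have hmain := ((hA.add hB).sub_const (1 / 2)).const_mul (s * (s - 1))⁻¹
  have hfun : Dpsi s = fun y : ℝ => (s * (s - 1))⁻¹ *
      ((1 - s) * y ^ (-s) / 2 * ((y + 1) / 2) ^ s +
        (y ^ (1 - s) + 1) / 2 * (s / 2 * ((y + 1) / 2) ^ (s - 1)) - 1 / 2) := rfl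
  rw [hfun]
  refine hmain.congr_deriv ?_
  · -- algebraic identity for the second derivative value
    have e1 : x ^ (-s) = x ^ (-s - 1) * x := by
      rw [← Real.rpow_add_one hx.ne', show -s - 1 + 1 = -s by ring]
    have e2 : x ^ (1 - s) = x ^ (-s) * x := by
      rw [← Real.rpow_add_one hx.ne', show -s + 1 = 1 - s by ring]
    have f1 : ((x + 1) / 2) ^ (s - 1) = ((x + 1) / 2) ^ (s - 2) * ((x + 1) / 2) := by
      rw [← Real.rpow_add_one hwpos.ne', show s - 2 + 1 = s - 1 by ring]
    have f2 : ((x + 1) / 2) ^ s = ((x + 1) / 2) ^ (s - 1) * ((x + 1) / 2) := by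
      rw [← Real.rpow_add_one hwpos.ne', show s - 1 + 1 = s by ring]
    have f3 : (s - 1 - 1 : ℝ) = s - 2 := by ring
    rw [f3, f2, f1, e2, e1]
    have hs1' : s - 1 ≠ 0 := sub_ne_zero.mpr hs1
    field_simp
    ring

/-- For `s ≠ 0,1`, `ψ_s` is twice differentiable on `(0,∞)` with
`ψ_s''(x) = ((x^{−s−1} + 1)/8)·((x+1)/2)^{s−2} > 0`; hence `ψ_s` is strictly convex
on `(0,∞)` and `ψ_s''(1) = 1/4`. -/
theorem psiS_second_deriv (s : ℝ) (hs0 : s ≠ 0) (hs1 : s ≠ 1) :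
    (∀ x : ℝ, 0 < x →
      DifferentiableAt ℝ (psiS s) x ∧
      HasDerivAt (deriv (psiS s)) (((x ^ (-s - 1) + 1) / 8) * ((x + 1) / 2) ^ (s - 2)) x ∧
      0 < ((x ^ (-s - 1) + 1) / 8) * ((x + 1) / 2) ^ (s - 2)) ∧
    StrictConvexOn ℝ (Set.Ioi (0 : ℝ)) (psiS s) ∧
    deriv (deriv (psiS s)) 1 = 1 / 4 := by
  have key : ∀ x : ℝ, 0 < x →
      HasDerivAt (deriv (psiS s)) (((x ^ (-s - 1) + 1) / 8) * ((x + 1) / 2) ^ (s - 2)) x := by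
    intro x hx
    have hev : deriv (psiS s) =ᶠ[nhds x] Dpsi s := by
      filter_upwards [Ioi_mem_nhds hx] with y hy using (hasDerivAt_psiS s hy).deriv
    exact (hasDerivAt_Dpsi s hs0 hs1 hx).congr_of_eventuallyEq hev
  have hpos : ∀ x : ℝ, 0 < x →
      0 < ((x ^ (-s - 1) + 1) / 8) * ((x + 1) / 2) ^ (s - 2) := by
    intro x hx
    have h1 : (0 : ℝ) < x ^ (-s - 1) := Real.rpow_pos_of_pos hx _
    have h2 : (0 : ℝ) < ((x + 1) / 2) ^ (s - 2) := Real.rpow_pos_of_pos (by linarith) _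
    positivity
  refine ⟨fun x hx => ⟨(hasDerivAt_psiS s hx).differentiableAt, key x hx, hpos x hx⟩, ?_, ?_⟩
  · refine strictConvexOn_of_deriv2_pos (convex_Ioi 0) ?_ ?_
    · exact fun x hx =>
        (hasDerivAt_psiS s hx).differentiableAt.continuousAt.continuousWithinAt
    · intro x hx
      rw [interior_Ioi] at hx
      have : deriv^[2] (psiS s) x = deriv (deriv (psiS s)) x := by
        simp [Function.iterate_succ]
      rw [this, (key x hx).deriv]
      exact hpos x hx
  · rw [(key 1 one_pos).deriv]
    norm_num
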